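/- Let f : ℝⁿ → ℝ be a multivariate quartic polynomial. Then for every x ∈ ℝⁿ and t > 0, the Hessian of the Steklov function with respect to x satisfies ∇_{xx} μ_f(x,t) = ∇²f(x) + (t²/6)·Σ_{i=1}^n ∇²f_{ii}, where f_{ii} := ∂²f/∂x_i² and each ∇²f_{ii} is a constant n×n matrix. -/

import Mathlib

/-!
For a polynomial the Steklov average splits over monomials into products of one-dimensional
averages of powers, and for `m ≤ 4`
`(2t)⁻¹ ∫_{u-t}^{u+t} v^m dv = u^m + (t²/6) m(m-1) u^(m-2) + [m = 4] t⁴/5`.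
Multiplying these out for a monomial of degree at most four, every term with two or more
corrections is a constant, so `μ_f = f + (t²/6) Δf + const`. The Hessian kills the constant,
and `f_ii` has degree at most two, so its Hessian is constant.
-/

open MeasureTheory Matrix Filter

/-- Partial derivative of `f` in the `i`-th coordinate direction. -/
noncomputable def pd {n : ℕ} (i : Fin n) (f : (Fin n → ℝ) → ℝ) : (Fin n → ℝ) → ℝ :=
  fun x => fderiv ℝ f x (Pi.single i 1)

/-- The gradient of `f` at `x`, as a vector of first partial derivatives. -/
noncomputable def grad {n : ℕ} (f : (Fin n → ℝ) → ℝ) (x : Fin n → ℝ) : Fin n → ℝ :=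
  fun i => pd i f x

/-- The Hessian matrix of `f` at `x`, of second partial derivatives. -/
noncomputable def hess {n : ℕ} (f : (Fin n → ℝ) → ℝ) (x : Fin n → ℝ) :
    Matrix (Fin n) (Fin n) ℝ :=
  Matrix.of fun i j => pd i (pd j f) x

/-- The Steklov function `μ_f(x,t) = (1/(2t)^n) ∫_{x-t}^{x+t} ⋯ ∫ f`. -/
noncomputable def steklov {n : ℕ} (f : (Fin n → ℝ) → ℝ) (x : Fin n → ℝ) (t : ℝ) : ℝ :=
  (1 / (2 * t) ^ n) * ∫ τ in Set.univ.pi (fun i => Set.Icc (x i - t) (x i + t)), f τ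

/-- `f` is a multivariate quartic polynomial: a polynomial of total degree at most 4. -/
def IsMQP {n : ℕ} (f : (Fin n → ℝ) → ℝ) : Prop :=
  ∃ P : MvPolynomial (Fin n) ℝ, P.totalDegree ≤ 4 ∧ ∀ x, f x = MvPolynomial.eval x P

/-- The closed Euclidean (ℓ₂) ball of radius `L` centered at `0` in `ℝⁿ`. -/
def ball2 {n : ℕ} (L : ℝ) : Set (Fin n → ℝ) := {y | ∑ i, (y i) ^ 2 ≤ L ^ 2}

/-- The Euclidean (ℓ₂) norm of a vector. -/
noncomputable def l2norm {m : ℕ} (v : Fin m → ℝ) : ℝ := Real.sqrt (∑ i, (v i) ^ 2)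

open MvPolynomial

lemma MvPolynomial.hasFDerivAt_eval {σ : Type*} [Fintype σ] (P : MvPolynomial σ ℝ) (x : σ → ℝ) :
    HasFDerivAt (fun y => eval y P)
      (∑ j, eval x (pderiv j P) • (ContinuousLinearMap.proj j : (σ → ℝ) →L[ℝ] ℝ)) x := by
  classical
  induction P using MvPolynomial.induction_on with
  | C a => simpa using hasFDerivAt_const a x
  | add p q hp hq =>
    simp only [map_add, add_smul, Finset.sum_add_distrib]
    exact hp.add hq
  | mul_X p i hp =>
    simp only [eval_mul, eval_X]
    refine (hp.mul (hasFDerivAt_apply i x)).congr_fderiv ?_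
    ext v
    simp [pderiv_X, Pi.single_apply, apply_ite (eval x), add_mul, mul_assoc,
      Finset.sum_add_distrib, Finset.mul_sum]

lemma pd_eval {n : ℕ} (i : Fin n) (P : MvPolynomial (Fin n) ℝ) :
    pd i (fun y => eval y P) = fun x => eval x (pderiv i P) := by
  ext x
  simp [pd, (hasFDerivAt_eval P x).fderiv, Pi.single_apply]

lemma hess_eval {n : ℕ} (P : MvPolynomial (Fin n) ℝ) (x : Fin n → ℝ) :
    hess (fun y => eval y P) x = Matrix.of fun i j => eval x (pderiv i (pderiv j P)) := by
  simp only [hess, pd_eval]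

lemma MvPolynomial.totalDegree_pderiv_le {σ R : Type*} [CommSemiring R] (i : σ)
    (P : MvPolynomial σ R) : (pderiv i P).totalDegree ≤ P.totalDegree - 1 := by
  classical
  refine Finset.sup_le fun m hm => ?_
  have hcoeff : coeff (m + Finsupp.single i 1) P ≠ 0 := by
    rw [mem_support_iff, coeff_pderiv] at hm
    exact left_ne_zero_of_mul hm
  have := le_totalDegree (mem_support_iff.mpr hcoeff)
  rw [Finsupp.sum_add_index' (fun _ => rfl) (fun _ _ _ => rfl), Finsupp.sum_single_index rfl]
    at this
  omega

lemma MvPolynomial.eval_eq_eval_of_totalDegree_eq_zero {σ R : Type*} [CommSemiring R]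
    {P : MvPolynomial σ R} (h : P.totalDegree = 0) (y z : σ → R) : eval y P = eval z P := by
  rw [totalDegree_eq_zero_iff_eq_C.mp h, eval_C, eval_C]

noncomputable def steklovPow (t : ℝ) (m : ℕ) (u : ℝ) : ℝ :=
  (2 * t)⁻¹ * ∫ v in (u - t)..(u + t), v ^ m

lemma steklovPow_eq {t : ℝ} (ht : t ≠ 0) {m : ℕ} (hm : m ≤ 4) (u : ℝ) :
    steklovPow t m u = u ^ m + t ^ 2 / 6 * ((m * (m - 1) : ℕ) : ℝ) * u ^ (m - 2)
      + if m = 4 then t ^ 4 / 5 else 0 := by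
  rw [steklovPow, integral_pow]
  interval_cases m <;> norm_num <;> field_simp <;> ring

lemma steklov_prod {n : ℕ} (g : Fin n → ℝ → ℝ) (x : Fin n → ℝ) {t : ℝ} (ht : 0 ≤ t) :
    steklov (fun y => ∏ i, g i (y i)) x t
      = ∏ i, (2 * t)⁻¹ * ∫ v in (x i - t)..(x i + t), g i v := by
  rw [steklov, volume_pi, Measure.restrict_pi_pi, integral_fintype_prod_eq_prod,
    Finset.prod_mul_distrib, Finset.prod_const, Finset.card_univ, Fintype.card_fin, one_div,
    inv_pow]
  congr 1
  refine Finset.prod_congr rfl fun i _ => ?_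
  rw [intervalIntegral.integral_of_le (by linarith), integral_Icc_eq_integral_Ioc]

lemma steklov_eval_eq_sum_prod_steklovPow {n : ℕ} (P : MvPolynomial (Fin n) ℝ) (x : Fin n → ℝ)
    {t : ℝ} (ht : 0 ≤ t) :
    steklov (fun y => eval y P) x t
      = ∑ a ∈ P.support, coeff a P * ∏ i, steklovPow t (a i) (x i) := by
  have hint : ∀ a : Fin n →₀ ℕ, IntegrableOn (fun y : Fin n → ℝ => coeff a P * ∏ i, y i ^ a i)
      (Set.univ.pi fun i => Set.Icc (x i - t) (x i + t)) := fun a => by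
    rw [Set.pi_univ_Icc]
    exact (by fun_prop : Continuous _).continuousOn.integrableOn_compact isCompact_Icc
  simp_rw [steklov, eval_eq', integral_finsetSum _ fun a _ => hint a, integral_const_mul,
    Finset.mul_sum]
  exact Finset.sum_congr rfl fun a _ => (mul_left_comm _ _ _).trans
    (congrArg (coeff a P * ·) (steklov_prod (fun i v => v ^ a i) x ht))

section LaplacianProdPow

variable {ι : Type*}

lemma sum_mul_sub_one_eq_zero {a : ι → ℕ} {s : Finset ι} (h : ∑ i ∈ s, a i ≤ 1) :
    ∑ i ∈ s, a i * (a i - 1) = 0 :=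
  Finset.sum_eq_zero fun i hi => by
    have := Finset.single_le_sum (fun j _ => Nat.zero_le (a j)) hi
    rw [Nat.sub_eq_zero_of_le (by omega), mul_zero]

variable [DecidableEq ι]

-- When `a i < 2` the coefficient `a i * (a i - 1)` vanishes, so the truncated exponent
-- `a i - 2` does no harm.
noncomputable def laplacianProdPow (a : ι → ℕ) (s : Finset ι) (x : ι → ℝ) : ℝ :=
  ∑ i ∈ s, ((a i * (a i - 1) : ℕ) : ℝ) * x i ^ (a i - 2) * ∏ j ∈ s.erase i, x j ^ a j

variable {a : ι → ℕ}

lemma laplacianProdPow_insert {s : Finset ι} {k : ι} (hk : k ∉ s) (x : ι → ℝ) :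
    laplacianProdPow a (insert k s) x
      = ((a k * (a k - 1) : ℕ) : ℝ) * x k ^ (a k - 2) * ∏ j ∈ s, x j ^ a j
        + x k ^ a k * laplacianProdPow a s x := by
  rw [laplacianProdPow, Finset.sum_insert hk, Finset.erase_insert hk, laplacianProdPow,
    Finset.mul_sum]
  congr 1
  refine Finset.sum_congr rfl fun i hi => ?_
  have hik : i ≠ k := fun h => hk (h ▸ hi)
  rw [Finset.erase_insert_of_ne hik.symm,
    Finset.prod_insert fun h => hk (Finset.mem_of_mem_erase h)]
  ring

lemma laplacianProdPow_of_sum_le_two {s : Finset ι} (h : ∑ i ∈ s, a i ≤ 2) (x : ι → ℝ) :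
    laplacianProdPow a s x = ((∑ i ∈ s, a i * (a i - 1) : ℕ) : ℝ) := by
  rw [Nat.cast_sum]
  refine Finset.sum_congr rfl fun i hi => ?_
  have hsplit := Finset.add_sum_erase s a hi
  by_cases hai : a i = 2
  · have hrest : ∀ j ∈ s.erase i, x j ^ a j = 1 := fun j hj => by
      have := Finset.single_le_sum (fun j _ => Nat.zero_le (a j)) hj
      rw [show a j = 0 by omega, pow_zero]
    simp [hai, Finset.prod_eq_one hrest]
  · rw [Nat.sub_eq_zero_of_le (show a i ≤ 1 by omega)]
    simp

lemma prod_steklovPow_eq {t : ℝ} (ht : t ≠ 0) {s : Finset ι} (hs : ∑ i ∈ s, a i ≤ 4) :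
    ∃ r : ℝ, (∀ x : ι → ℝ, ∏ i ∈ s, steklovPow t (a i) (x i)
        = ∏ i ∈ s, x i ^ a i + t ^ 2 / 6 * laplacianProdPow a s x + r)
      ∧ (∑ i ∈ s, a i < 4 → r = 0) := by
  induction s using Finset.induction_on with
  | empty => exact ⟨0, fun x => by simp [laplacianProdPow], fun _ => rfl⟩
  | insert k s hk ih =>
    rw [Finset.sum_insert hk] at hs ⊢
    obtain ⟨r, hr, hr0⟩ := ih (by omega)
    have hk4 : a k ≤ 4 := by omega
    simp_rw [Finset.prod_insert hk, laplacianProdPow_insert hk, hr, steklovPow_eq ht hk4]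
    interval_cases hm : a k
    · exact ⟨r, fun x => by norm_num, fun h => hr0 (by omega)⟩
    · refine ⟨0, fun x => ?_, fun _ => rfl⟩
      rw [hr0 (by omega)]
      norm_num; ring
    -- `(x k ^ 2 + t ^ 2 / 3) * (x i ^ 2 + t ^ 2 / 3)` with `a i = 2` leaves `(t ^ 2 / 3) ^ 2`
    · refine ⟨2 * (t ^ 2 / 6) ^ 2 * ((∑ i ∈ s, a i * (a i - 1) : ℕ) : ℝ), fun x => ?_,
        fun h => ?_⟩
      · rw [hr0 (by omega), laplacianProdPow_of_sum_le_two (by omega)]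
        norm_num; ring
      · rw [sum_mul_sub_one_eq_zero (by omega : ∑ i ∈ s, a i ≤ 1)]
        simp
    · refine ⟨0, fun x => ?_, fun _ => rfl⟩
      rw [hr0 (by omega), laplacianProdPow_of_sum_le_two (by omega),
        sum_mul_sub_one_eq_zero (by omega)]
      norm_num; ring
    · have hs0 : ∀ i ∈ s, a i = 0 := Finset.sum_eq_zero_iff.mp (by omega)
      refine ⟨t ^ 4 / 5, fun x => ?_, by omega⟩
      rw [hr0 (by omega), laplacianProdPow_of_sum_le_two (by omega),
        sum_mul_sub_one_eq_zero (by omega),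
        Finset.prod_eq_one fun i hi => by rw [hs0 i hi, pow_zero]]
      norm_num; ring

end LaplacianProdPow

lemma eval_pderiv_pderiv_monomial {σ : Type*} [Fintype σ] [DecidableEq σ] (k : σ) (a : σ →₀ ℕ)
    (c : ℝ) (x : σ → ℝ) :
    eval x (pderiv k (pderiv k (monomial a c))) = c * (((a k * (a k - 1) : ℕ) : ℝ)
      * x k ^ (a k - 2) * ∏ j ∈ Finset.univ.erase k, x j ^ a j) := by
  have hoff : ∀ j ∈ Finset.univ.erase k,
      (a - Finsupp.single k 1 - Finsupp.single k 1 : σ →₀ ℕ) j = a j :=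
    fun j hj => by simp [(Finset.ne_of_mem_erase hj).symm]
  rw [pderiv_monomial, pderiv_monomial, eval_monomial,
    Finsupp.prod_fintype _ _ fun _ => pow_zero _, ← Finset.mul_prod_erase _ _ (Finset.mem_univ k),
    Finset.prod_congr rfl fun j hj => by rw [hoff j hj]]
  simp only [Finsupp.tsub_apply, Finsupp.single_eq_same, Nat.sub_sub, Nat.reduceAdd]
  push_cast
  ring

lemma sum_eval_pderiv_pderiv {σ : Type*} [Fintype σ] [DecidableEq σ] (P : MvPolynomial σ ℝ)
    (x : σ → ℝ) :
    ∑ k, eval x (pderiv k (pderiv k P))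
      = ∑ a ∈ P.support, coeff a P * laplacianProdPow (⇑a) Finset.univ x := by
  conv_lhs => rw [P.as_sum]
  simp only [map_sum, eval_pderiv_pderiv_monomial, laplacianProdPow, Finset.mul_sum]
  exact Finset.sum_comm

lemma steklov_eval_of_totalDegree_le_four {n : ℕ} {t : ℝ} (ht : 0 < t)
    (P : MvPolynomial (Fin n) ℝ) (hP : P.totalDegree ≤ 4) :
    ∃ r : ℝ, ∀ x, steklov (fun y => eval y P) x t
      = eval x (P + C (t ^ 2 / 6) * ∑ k, pderiv k (pderiv k P) + C r) := by
  have hmonomial : ∀ a ∈ P.support, ∃ r : ℝ, ∀ x : Fin n → ℝ, ∏ i, steklovPow t (a i) (x i)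
      = ∏ i, x i ^ a i + t ^ 2 / 6 * laplacianProdPow (⇑a) Finset.univ x + r := by
    intro a ha
    have hdeg := (le_totalDegree ha).trans hP
    rw [Finsupp.sum_fintype _ _ fun _ => rfl] at hdeg
    exact (prod_steklovPow_eq ht.ne' hdeg).imp fun _ h => h.1
  choose! r hr using hmonomial
  refine ⟨∑ a ∈ P.support, coeff a P * r a, fun x => ?_⟩
  rw [steklov_eval_eq_sum_prod_steklovPow P x ht.le,
    Finset.sum_congr rfl fun a ha => by rw [hr a ha x],
    map_add, map_add, map_mul, eval_C, eval_C, map_sum, sum_eval_pderiv_pderiv, eval_eq' x P]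
  simp only [mul_add, Finset.sum_add_distrib, Finset.mul_sum, mul_left_comm (t ^ 2 / 6)]

/-- For a multivariate quartic polynomial `f`, the Hessian of the Steklov function satisfies
`∇ₓₓ μ_f(x,t) = ∇²f(x) + (t²/6) Σᵢ ∇²f_{ii}`, where each `∇²f_{ii}` is a constant matrix. -/
theorem steklov_hessian {n : ℕ} (f : (Fin n → ℝ) → ℝ) (hf : IsMQP f)
    (x : Fin n → ℝ) (t : ℝ) (ht : 0 < t) :
    hess (fun y => steklov f y t) x
      = hess f x + (t ^ 2 / 6) • ∑ i, hess (pd i (pd i f)) x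
    ∧ ∀ i : Fin n, ∀ y z : Fin n → ℝ, hess (pd i (pd i f)) y = hess (pd i (pd i f)) z := by
  obtain ⟨P, hP, rfl⟩ : ∃ P : MvPolynomial (Fin n) ℝ, P.totalDegree ≤ 4 ∧ f = fun y => eval y P :=
    hf.imp fun P hP => ⟨hP.1, funext hP.2⟩
  simp only [pd_eval, hess_eval]
  constructor
  · obtain ⟨r, hr⟩ := steklov_eval_of_totalDegree_le_four ht P hP
    rw [funext hr, hess_eval]
    ext i j
    simp [Finset.mul_sum, Matrix.sum_apply]
  · intro i y z
    ext j k
    have h1 := totalDegree_pderiv_le i P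
    have h2 := totalDegree_pderiv_le i (pderiv i P)
    have h3 := totalDegree_pderiv_le k (pderiv i (pderiv i P))
    have h4 := totalDegree_pderiv_le j (pderiv k (pderiv i (pderiv i P)))
    exact eval_eq_eval_of_totalDegree_eq_zero (by omega) y z
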